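/- arXiv:1510.07344 — 2 statements merged into one kernel-verified Lean document; each statement's English description precedes it below -/
import Mathlib

section
/- Every pair of finitely supported random variables X and Y (i.e., a joint probability distribution p_{XY} on finite sets 𝒳 × 𝒴) has a unique maximal common partitioning: among all families of pairs of subsets (𝒳_i, 𝒴_i)_{i=1}^t with the 𝒳_i pairwise disjoint, the 𝒴_i pairwise disjoint, p(𝒳_i | 𝒴_j) = p(𝒴_i | 𝒳_j) = δ_{ij}, and p_X(x) p_Y(y) > 0 for all (x,y) ∈ 𝒳_i × 𝒴_i, there is a unique one (up to relabeling of indices) of maximal length t. -/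
open scoped BigOperators

/-- A common partitioning of length `t` for a joint distribution `p` on `X × Y`:
pairs of subsets `(XS i, YS i)` with the `XS i` pairwise disjoint, the `YS i` pairwise
disjoint, `p(XS i | YS j) = p(YS i | XS j) = δ_{ij}`, and
`p_X(x) p_Y(y) > 0` for all `(x, y) ∈ XS i × YS i`. -/
structure CommonPartition {X Y : Type*} [Fintype X] [Fintype Y]
    (p : X → Y → ℝ) (t : ℕ) where
  XS : Fin t → Finset X
  YS : Fin t → Finset Y
  disjX : ∀ i j, i ≠ j → Disjoint (XS i) (XS j)
  disjY : ∀ i j, i ≠ j → Disjoint (YS i) (YS j)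
  posX : ∀ j, 0 < ∑ x ∈ XS j, ∑ y, p x y
  posY : ∀ j, 0 < ∑ y ∈ YS j, ∑ x, p x y
  condXgivenY : ∀ i j,
    (∑ x ∈ XS i, ∑ y ∈ YS j, p x y) / (∑ y ∈ YS j, ∑ x, p x y) = if i = j then 1 else 0
  condYgivenX : ∀ i j,
    (∑ y ∈ YS i, ∑ x ∈ XS j, p x y) / (∑ x ∈ XS j, ∑ y, p x y) = if i = j then 1 else 0
  supp : ∀ i, ∀ x ∈ XS i, ∀ y ∈ YS i, 0 < (∑ y', p x y') * (∑ x', p x' y)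


namespace CPaux
set_option linter.unusedSectionVars false


attribute [local instance] Classical.propDecidable

variable {X Y : Type*} [Fintype X] [Fintype Y]

def rel (p : X → Y → ℝ) : (X ⊕ Y) → (X ⊕ Y) → Prop := fun z w =>
  match z, w with
  | Sum.inl x, Sum.inr y => 0 < p x y
  | _, _ => False

def G (p : X → Y → ℝ) : SimpleGraph (X ⊕ Y) := SimpleGraph.fromRel (rel p)

lemma adj_iff {p : X → Y → ℝ} {z w : X ⊕ Y} :
    (G p).Adj z w ↔ z ≠ w ∧ (rel p z w ∨ rel p w z) := Iff.rfl

lemma adj_inl_inr {p : X → Y → ℝ} {x : X} {y : Y} :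
    (G p).Adj (Sum.inl x) (Sum.inr y) ↔ 0 < p x y := by
  simp [adj_iff, rel]

lemma adj_cases {p : X → Y → ℝ} {z w : X ⊕ Y} (h : (G p).Adj z w) :
    ∃ x y, 0 < p x y ∧ ((z = Sum.inl x ∧ w = Sum.inr y) ∨ (z = Sum.inr y ∧ w = Sum.inl x)) := by
  rcases h with ⟨hne, h | h⟩
  · match z, w, h with
    | Sum.inl x, Sum.inr y, h => exact ⟨x, y, h, Or.inl ⟨rfl, rfl⟩⟩
  · match z, w, h with
    | Sum.inr y, Sum.inl x, h => exact ⟨x, y, h, Or.inr ⟨rfl, rfl⟩⟩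

def sp (p : X → Y → ℝ) : X ⊕ Y → Prop :=
  Sum.elim (fun x => 0 < ∑ y, p x y) (fun y => 0 < ∑ x, p x y)

variable {p : X → Y → ℝ}

lemma adj_sp (hpos : ∀ x y, 0 ≤ p x y) {z w : X ⊕ Y} (h : (G p).Adj z w) :
    sp p z ∧ sp p w := by
  obtain ⟨x, y, hp, hc⟩ := adj_cases h
  have hx : 0 < ∑ y', p x y' :=
    Finset.sum_pos' (fun i _ => hpos x i) ⟨y, Finset.mem_univ y, hp⟩
  have hy : 0 < ∑ x', p x' y :=
    Finset.sum_pos' (fun i _ => hpos i y) ⟨x, Finset.mem_univ x, hp⟩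
  rcases hc with ⟨rfl, rfl⟩ | ⟨rfl, rfl⟩ <;>
    exact ⟨by simpa [sp] using ‹_›, by simpa [sp] using ‹_›⟩

lemma reach_sp (hpos : ∀ x y, 0 ≤ p x y) {z w : X ⊕ Y} (hz : sp p z)
    (h : (G p).Reachable z w) : sp p w := by
  have h' := (SimpleGraph.reachable_iff_reflTransGen z w).mp h
  induction h' with
  | refl => exact hz
  | tail _ hadj ih => exact (adj_sp hpos hadj).2

noncomputable def Gd (p : X → Y → ℝ) : Finset (G p).ConnectedComponent :=
  Finset.univ.filter (fun c => ∃ z, sp p z ∧ (G p).connectedComponentMk z = c)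

noncomputable def XSc (p : X → Y → ℝ) (c : (G p).ConnectedComponent) : Finset X :=
  Finset.univ.filter (fun x => (G p).connectedComponentMk (Sum.inl x) = c)

noncomputable def YSc (p : X → Y → ℝ) (c : (G p).ConnectedComponent) : Finset Y :=
  Finset.univ.filter (fun y => (G p).connectedComponentMk (Sum.inr y) = c)

lemma mem_XSc {c x} : x ∈ XSc p c ↔ (G p).connectedComponentMk (Sum.inl x) = c := by
  simp [XSc]

lemma mem_YSc {c y} : y ∈ YSc p c ↔ (G p).connectedComponentMk (Sum.inr y) = c := by
  simp [YSc]

/-- every member of a good component is supported -/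
lemma good_sp (hpos : ∀ x y, 0 ≤ p x y) {c} (hc : c ∈ Gd p) {z}
    (hz : (G p).connectedComponentMk z = c) : sp p z := by
  obtain ⟨-, w, hw, hwc⟩ := Finset.mem_filter.mp hc
  exact reach_sp hpos hw (SimpleGraph.ConnectedComponent.eq.mp (hwc.trans hz.symm))

lemma XSc_sp (hpos : ∀ x y, 0 ≤ p x y) {c} (hc : c ∈ Gd p) {x} (hx : x ∈ XSc p c) :
    0 < ∑ y, p x y := good_sp hpos hc (mem_XSc.mp hx)

lemma YSc_sp (hpos : ∀ x y, 0 ≤ p x y) {c} (hc : c ∈ Gd p) {y} (hy : y ∈ YSc p c) :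
    0 < ∑ x, p x y := good_sp hpos hc (mem_YSc.mp hy)

lemma XSc_nonempty (hpos : ∀ x y, 0 ≤ p x y) {c} (hc : c ∈ Gd p) :
    ∃ x ∈ XSc p c, 0 < ∑ y, p x y := by
  obtain ⟨-, z, hz, hzc⟩ := Finset.mem_filter.mp hc
  rcases z with x | y
  · exact ⟨x, mem_XSc.mpr hzc, by simpa [sp] using hz⟩
  · have hy : 0 < ∑ x, p x y := by simpa [sp] using hz
    have hex : ∃ x, 0 < p x y := by
      by_contra hne
      push_neg at hne
      have : ∑ x, p x y ≤ 0 := Finset.sum_nonpos fun i _ => hne i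
      linarith
    obtain ⟨x, hx⟩ := hex
    have hadj : (G p).Adj (Sum.inl x) (Sum.inr y) := adj_inl_inr.mpr hx
    refine ⟨x, mem_XSc.mpr ?_, (adj_sp hpos hadj).1⟩
    rw [← hzc]
    exact SimpleGraph.ConnectedComponent.eq.mpr hadj.reachable

lemma YSc_nonempty (hpos : ∀ x y, 0 ≤ p x y) {c} (hc : c ∈ Gd p) :
    ∃ y ∈ YSc p c, 0 < ∑ x, p x y := by
  obtain ⟨-, z, hz, hzc⟩ := Finset.mem_filter.mp hc
  rcases z with x | y
  · have hx : 0 < ∑ y, p x y := by simpa [sp] using hz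
    have hex : ∃ y, 0 < p x y := by
      by_contra hne
      push_neg at hne
      have : ∑ y, p x y ≤ 0 := Finset.sum_nonpos fun i _ => hne i
      linarith
    obtain ⟨y, hy⟩ := hex
    have hadj : (G p).Adj (Sum.inl x) (Sum.inr y) := adj_inl_inr.mpr hy
    refine ⟨y, mem_YSc.mpr ?_, (adj_sp hpos hadj).2⟩
    rw [← hzc]
    exact SimpleGraph.ConnectedComponent.eq.mpr hadj.reachable.symm
  · exact ⟨y, mem_YSc.mpr hzc, by simpa [sp] using hz⟩

lemma mem_Gd {c} : c ∈ Gd p ↔ ∃ z, sp p z ∧ (G p).connectedComponentMk z = c := by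
  simp [Gd]

lemma comp_eq_of_pos {x : X} {y : Y} (hp : 0 < p x y) :
    (G p).connectedComponentMk (Sum.inl x) = (G p).connectedComponentMk (Sum.inr y) :=
  SimpleGraph.ConnectedComponent.eq.mpr (adj_inl_inr.mpr hp).reachable

lemma cross_zero_right (hpos : ∀ x y, 0 ≤ p x y) {c x y} (hx : x ∈ XSc p c)
    (hy : y ∉ YSc p c) : p x y = 0 := by
  by_contra h
  have hp : 0 < p x y := lt_of_le_of_ne (hpos x y) (Ne.symm h)
  exact hy (mem_YSc.mpr ((comp_eq_of_pos hp).symm.trans (mem_XSc.mp hx)))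

lemma cross_zero_left (hpos : ∀ x y, 0 ≤ p x y) {c x y} (hy : y ∈ YSc p c)
    (hx : x ∉ XSc p c) : p x y = 0 := by
  by_contra h
  have hp : 0 < p x y := lt_of_le_of_ne (hpos x y) (Ne.symm h)
  exact hx (mem_XSc.mpr ((comp_eq_of_pos hp).trans (mem_YSc.mp hy)))

section Part

variable {t : ℕ} (C : CommonPartition p t)

lemma Y_nonempty (i : Fin t) : (C.YS i).Nonempty := by
  by_contra h
  rw [Finset.not_nonempty_iff_eq_empty] at h
  have := C.posY i
  rw [h] at this
  simp at this

lemma X_nonempty (i : Fin t) : (C.XS i).Nonempty := by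
  by_contra h
  rw [Finset.not_nonempty_iff_eq_empty] at h
  have := C.posX i
  rw [h] at this
  simp at this

lemma memX_sp (hpos : ∀ x y, 0 ≤ p x y) {i x} (hx : x ∈ C.XS i) : 0 < ∑ y, p x y := by
  obtain ⟨y, hy⟩ := Y_nonempty C i
  have h := C.supp i x hx y hy
  rcases mul_pos_iff.mp h with ⟨h1, h2⟩ | ⟨h1, h2⟩
  · exact h1
  · exact absurd (Finset.sum_nonneg fun x' _ => hpos x' y) (not_le.mpr h2)

lemma memY_sp (hpos : ∀ x y, 0 ≤ p x y) {i y} (hy : y ∈ C.YS i) : 0 < ∑ x, p x y := by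
  obtain ⟨x, hx⟩ := X_nonempty C i
  have h := C.supp i x hx y hy
  rcases mul_pos_iff.mp h with ⟨h1, h2⟩ | ⟨h1, h2⟩
  · exact h2
  · exact absurd (Finset.sum_nonneg fun y' _ => hpos x y') (not_le.mpr h1)

lemma closure_XY (hpos : ∀ x y, 0 ≤ p x y) {i x y} (hx : x ∈ C.XS i) (hp : 0 < p x y) :
    y ∈ C.YS i := by
  by_contra hy
  have hD := C.posX i
  have h1 := C.condYgivenX i i
  rw [if_pos rfl, div_eq_one_iff_eq (ne_of_gt hD)] at h1
  rw [Finset.sum_comm] at h1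
  have hsplit : ∑ x' ∈ C.XS i, ((∑ y' ∈ Finset.univ \ C.YS i, p x' y') + ∑ y' ∈ C.YS i, p x' y')
      = ∑ x' ∈ C.XS i, ∑ y', p x' y' :=
    Finset.sum_congr rfl fun x' _ => Finset.sum_sdiff (Finset.subset_univ _)
  rw [Finset.sum_add_distrib] at hsplit
  have key : ∑ x' ∈ C.XS i, ∑ y' ∈ Finset.univ \ C.YS i, p x' y' = 0 := by linarith
  have hz := (Finset.sum_eq_zero_iff_of_nonneg
    (fun x' _ => Finset.sum_nonneg fun y' _ => hpos x' y')).mp key x hx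
  have := (Finset.sum_eq_zero_iff_of_nonneg (fun y' _ => hpos x y')).mp hz y
    (Finset.mem_sdiff.mpr ⟨Finset.mem_univ y, hy⟩)
  linarith

lemma closure_YX (hpos : ∀ x y, 0 ≤ p x y) {i x y} (hy : y ∈ C.YS i) (hp : 0 < p x y) :
    x ∈ C.XS i := by
  by_contra hx
  have hD := C.posY i
  have h1 := C.condXgivenY i i
  rw [if_pos rfl, div_eq_one_iff_eq (ne_of_gt hD)] at h1
  rw [Finset.sum_comm] at h1
  have hsplit : ∑ y' ∈ C.YS i, ((∑ x' ∈ Finset.univ \ C.XS i, p x' y') + ∑ x' ∈ C.XS i, p x' y')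
      = ∑ y' ∈ C.YS i, ∑ x', p x' y' :=
    Finset.sum_congr rfl fun y' _ => Finset.sum_sdiff (Finset.subset_univ _)
  rw [Finset.sum_add_distrib] at hsplit
  have key : ∑ y' ∈ C.YS i, ∑ x' ∈ Finset.univ \ C.XS i, p x' y' = 0 := by linarith
  have hz := (Finset.sum_eq_zero_iff_of_nonneg
    (fun y' _ => Finset.sum_nonneg fun x' _ => hpos x' y')).mp key y hy
  have := (Finset.sum_eq_zero_iff_of_nonneg (fun x' _ => hpos x' y)).mp hz x
    (Finset.mem_sdiff.mpr ⟨Finset.mem_univ x, hx⟩)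
  linarith

def memB (C : CommonPartition p t) (i : Fin t) : X ⊕ Y → Prop :=
  Sum.elim (· ∈ C.XS i) (· ∈ C.YS i)

lemma memB_adj (hpos : ∀ x y, 0 ≤ p x y) {i z w} (hz : memB C i z) (h : (G p).Adj z w) :
    memB C i w := by
  obtain ⟨x, y, hp, hc⟩ := adj_cases h
  rcases hc with ⟨rfl, rfl⟩ | ⟨rfl, rfl⟩
  · exact closure_XY C hpos hz hp
  · exact closure_YX C hpos hz hp

lemma memB_reach (hpos : ∀ x y, 0 ≤ p x y) {i z w} (hz : memB C i z)
    (h : (G p).Reachable z w) : memB C i w := by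
  have h' := (SimpleGraph.reachable_iff_reflTransGen z w).mp h
  clear h
  induction h' with
  | refl => exact hz
  | tail _ hadj ih => exact memB_adj C hpos ih hadj

end Part

/-- The canonical (maximal) partition indexed by good connected components. -/
noncomputable def canonical (p : X → Y → ℝ) (hpos : ∀ x y, 0 ≤ p x y) :
    CommonPartition p (Gd p).card where
  XS i := XSc p ((Gd p).equivFin.symm i : (G p).ConnectedComponent)
  YS i := YSc p ((Gd p).equivFin.symm i : (G p).ConnectedComponent)
  disjX i j hij := by
    have hcd : ((Gd p).equivFin.symm i : (G p).ConnectedComponent)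
        ≠ ((Gd p).equivFin.symm j : (G p).ConnectedComponent) := by
      intro h
      exact hij ((Gd p).equivFin.symm.injective (Subtype.ext h))
    rw [Finset.disjoint_left]
    intro x hx hx'
    exact hcd ((mem_XSc.mp hx).symm.trans (mem_XSc.mp hx'))
  disjY i j hij := by
    have hcd : ((Gd p).equivFin.symm i : (G p).ConnectedComponent)
        ≠ ((Gd p).equivFin.symm j : (G p).ConnectedComponent) := by
      intro h
      exact hij ((Gd p).equivFin.symm.injective (Subtype.ext h))
    rw [Finset.disjoint_left]
    intro y hy hy'
    exact hcd ((mem_YSc.mp hy).symm.trans (mem_YSc.mp hy'))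
  posX j := by
    obtain ⟨x, hx, hxp⟩ := XSc_nonempty hpos ((Gd p).equivFin.symm j).2
    exact Finset.sum_pos' (fun x' _ => Finset.sum_nonneg fun y' _ => hpos x' y') ⟨x, hx, hxp⟩
  posY j := by
    obtain ⟨y, hy, hyp⟩ := YSc_nonempty hpos ((Gd p).equivFin.symm j).2
    exact Finset.sum_pos' (fun y' _ => Finset.sum_nonneg fun x' _ => hpos x' y') ⟨y, hy, hyp⟩
  condXgivenY i j := by
    set c := ((Gd p).equivFin.symm i : (G p).ConnectedComponent)
    set d := ((Gd p).equivFin.symm j : (G p).ConnectedComponent)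
    have hD : 0 < ∑ y ∈ YSc p d, ∑ x, p x y := by
      obtain ⟨y, hy, hyp⟩ := YSc_nonempty hpos ((Gd p).equivFin.symm j).2
      exact Finset.sum_pos' (fun y' _ => Finset.sum_nonneg fun x' _ => hpos x' y') ⟨y, hy, hyp⟩
    by_cases hij : i = j
    · subst hij
      rw [if_pos rfl]
      have hnum : ∑ x ∈ XSc p c, ∑ y ∈ YSc p c, p x y = ∑ y ∈ YSc p c, ∑ x, p x y := by
        rw [Finset.sum_comm]
        refine Finset.sum_congr rfl fun y hy => ?_
        exact Finset.sum_subset (Finset.subset_univ _)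
          (fun x _ hx => cross_zero_left hpos hy hx)
      rw [hnum, div_self (ne_of_gt hD)]
    · rw [if_neg hij]
      have hcd : c ≠ d := by
        intro h
        exact hij ((Gd p).equivFin.symm.injective (Subtype.ext h))
      have hnum : ∑ x ∈ XSc p c, ∑ y ∈ YSc p d, p x y = 0 := by
        refine Finset.sum_eq_zero fun x hx => Finset.sum_eq_zero fun y hy => ?_
        by_contra h
        have hp : 0 < p x y := lt_of_le_of_ne (hpos x y) (Ne.symm h)
        exact hcd ((mem_XSc.mp hx).symm.trans ((comp_eq_of_pos hp).trans (mem_YSc.mp hy)))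
      rw [hnum, zero_div]
  condYgivenX i j := by
    set c := ((Gd p).equivFin.symm i : (G p).ConnectedComponent)
    set d := ((Gd p).equivFin.symm j : (G p).ConnectedComponent)
    have hD : 0 < ∑ x ∈ XSc p d, ∑ y, p x y := by
      obtain ⟨x, hx, hxp⟩ := XSc_nonempty hpos ((Gd p).equivFin.symm j).2
      exact Finset.sum_pos' (fun x' _ => Finset.sum_nonneg fun y' _ => hpos x' y') ⟨x, hx, hxp⟩
    by_cases hij : i = j
    · subst hij
      rw [if_pos rfl]
      have hnum : ∑ y ∈ YSc p c, ∑ x ∈ XSc p c, p x y = ∑ x ∈ XSc p c, ∑ y, p x y := by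
        rw [Finset.sum_comm]
        refine Finset.sum_congr rfl fun x hx => ?_
        exact Finset.sum_subset (Finset.subset_univ _)
          (fun y _ hy => cross_zero_right hpos hx hy)
      rw [hnum, div_self (ne_of_gt hD)]
    · rw [if_neg hij]
      have hcd : c ≠ d := by
        intro h
        exact hij ((Gd p).equivFin.symm.injective (Subtype.ext h))
      have hnum : ∑ y ∈ YSc p c, ∑ x ∈ XSc p d, p x y = 0 := by
        refine Finset.sum_eq_zero fun y hy => Finset.sum_eq_zero fun x hx => ?_
        by_contra h
        have hp : 0 < p x y := lt_of_le_of_ne (hpos x y) (Ne.symm h)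
        exact hcd ((mem_YSc.mp hy).symm.trans
          ((comp_eq_of_pos hp).symm.trans (mem_XSc.mp hx)))
      rw [hnum, zero_div]
  supp i x hx y hy :=
    mul_pos (XSc_sp hpos ((Gd p).equivFin.symm i).2 hx)
      (YSc_sp hpos ((Gd p).equivFin.symm i).2 hy)


end CPaux

/-- Every pair of finitely supported random variables (a joint probability distribution
`p` on finite `X × Y`) has a maximal common partitioning, and it is unique up to
relabeling of the indices (when the blocks are restricted to the support). -/
theorem unique_maximal_common_partitioning
    {X Y : Type*} [Fintype X] [Fintype Y] [DecidableEq X] [DecidableEq Y]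
    (p : X → Y → ℝ) (hpos : ∀ x y, 0 ≤ p x y) (hsum : ∑ x, ∑ y, p x y = 1) :
    ∃ (t : ℕ) (C : CommonPartition p t),
      (∀ t', Nonempty (CommonPartition p t') → t' ≤ t) ∧
      (∀ C' : CommonPartition p t,
        ∃ e : Fin t ≃ Fin t, ∀ i,
          (C'.XS i).filter (fun x => 0 < ∑ y, p x y)
            = (C.XS (e i)).filter (fun x => 0 < ∑ y, p x y) ∧
          (C'.YS i).filter (fun y => 0 < ∑ x, p x y)
            = (C.YS (e i)).filter (fun y => 0 < ∑ x, p x y)) := by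
  classical
  refine ⟨(CPaux.Gd p).card, CPaux.canonical p hpos, ?_, ?_⟩
  · rintro t' ⟨C'⟩
    choose ys hys using fun i => CPaux.Y_nonempty C' i
    have hgood : ∀ i, (CPaux.G p).connectedComponentMk (Sum.inr (ys i)) ∈ CPaux.Gd p := by
      intro i
      refine CPaux.mem_Gd.mpr ⟨Sum.inr (ys i), ?_, rfl⟩
      simpa [CPaux.sp] using CPaux.memY_sp C' hpos (hys i)
    have hginj : ∀ i j, (CPaux.G p).connectedComponentMk (Sum.inr (ys i))
        = (CPaux.G p).connectedComponentMk (Sum.inr (ys j)) → i = j := by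
      intro i j hval
      by_contra hij
      have hreach := SimpleGraph.ConnectedComponent.eq.mp hval
      have hmem : CPaux.memB C' i (Sum.inr (ys j)) :=
        CPaux.memB_reach C' hpos (z := Sum.inr (ys i)) (hys i) hreach
      exact (Finset.disjoint_left.mp (C'.disjY i j hij) hmem) (hys j)
    have hcard : (Finset.univ : Finset (Fin t')).card ≤ (CPaux.Gd p).card :=
      Finset.card_le_card_of_injOn
        (fun i => (CPaux.G p).connectedComponentMk (Sum.inr (ys i)))
        (fun i _ => hgood i) (fun i _ j _ h => hginj i j h)
    simpa using hcard
  · intro C'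
    choose ys hys using fun i => CPaux.Y_nonempty C' i
    have hgood : ∀ i, (CPaux.G p).connectedComponentMk (Sum.inr (ys i)) ∈ CPaux.Gd p := by
      intro i
      refine CPaux.mem_Gd.mpr ⟨Sum.inr (ys i), ?_, rfl⟩
      simpa [CPaux.sp] using CPaux.memY_sp C' hpos (hys i)
    set g : Fin (CPaux.Gd p).card → (CPaux.G p).ConnectedComponent :=
      fun i => (CPaux.G p).connectedComponentMk (Sum.inr (ys i)) with hg
    have hginj : Function.Injective g := by
      intro i j hval
      by_contra hij
      have hreach := SimpleGraph.ConnectedComponent.eq.mp hval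
      have hmem : CPaux.memB C' i (Sum.inr (ys j)) :=
        CPaux.memB_reach C' hpos (z := Sum.inr (ys i)) (hys i) hreach
      exact (Finset.disjoint_left.mp (C'.disjY i j hij) hmem) (hys j)
    have himg : Finset.image g Finset.univ = CPaux.Gd p := by
      refine Finset.eq_of_subset_of_card_le ?_ ?_
      · intro c hc
        obtain ⟨i, -, rfl⟩ := Finset.mem_image.mp hc
        exact hgood i
      · rw [Finset.card_image_of_injective _ hginj]
        simp
    have hsurj : ∀ c ∈ CPaux.Gd p, ∃ j, g j = c := by
      intro c hc
      rw [← himg] at hc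
      obtain ⟨j, -, hj⟩ := Finset.mem_image.mp hc
      exact ⟨j, hj⟩
    let f : Fin (CPaux.Gd p).card → Fin (CPaux.Gd p).card :=
      fun i => (CPaux.Gd p).equivFin ⟨g i, hgood i⟩
    have hfinj : Function.Injective f := by
      intro i j hij
      apply hginj
      have := (CPaux.Gd p).equivFin.injective hij
      exact congrArg Subtype.val this
    have hfbij : Function.Bijective f := Finite.injective_iff_bijective.mp hfinj
    refine ⟨Equiv.ofBijective f hfbij, fun i => ?_⟩
    have hcanX : (CPaux.canonical p hpos).XS (Equiv.ofBijective f hfbij i)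
        = CPaux.XSc p (g i) := by
      show CPaux.XSc p _ = _
      congr 1
      show ((CPaux.Gd p).equivFin.symm ((CPaux.Gd p).equivFin ⟨g i, hgood i⟩)
        : (CPaux.G p).ConnectedComponent) = g i
      rw [Equiv.symm_apply_apply]
    have hcanY : (CPaux.canonical p hpos).YS (Equiv.ofBijective f hfbij i)
        = CPaux.YSc p (g i) := by
      show CPaux.YSc p _ = _
      congr 1
      show ((CPaux.Gd p).equivFin.symm ((CPaux.Gd p).equivFin ⟨g i, hgood i⟩)
        : (CPaux.G p).ConnectedComponent) = g i
      rw [Equiv.symm_apply_apply]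
    have hXeq : C'.XS i = CPaux.XSc p (g i) := by
      ext x
      constructor
      · intro hx
        have hxsp : CPaux.sp p (Sum.inl x) := by
          simpa [CPaux.sp] using CPaux.memX_sp C' hpos hx
        have hxgood : (CPaux.G p).connectedComponentMk (Sum.inl x) ∈ CPaux.Gd p :=
          CPaux.mem_Gd.mpr ⟨Sum.inl x, hxsp, rfl⟩
        obtain ⟨j, hj⟩ := hsurj _ hxgood
        have hmem : CPaux.memB C' j (Sum.inl x) :=
          CPaux.memB_reach C' hpos (z := Sum.inr (ys j)) (hys j)
            (SimpleGraph.ConnectedComponent.eq.mp hj)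
        have hji : j = i := by
          by_contra hji
          exact (Finset.disjoint_left.mp (C'.disjX j i hji) hmem) hx
        subst hji
        exact CPaux.mem_XSc.mpr hj.symm
      · intro hx
        have hval : (CPaux.G p).connectedComponentMk (Sum.inl x) = g i :=
          CPaux.mem_XSc.mp hx
        exact CPaux.memB_reach C' hpos (z := Sum.inr (ys i)) (hys i)
          (SimpleGraph.ConnectedComponent.eq.mp hval.symm)
    have hYeq : C'.YS i = CPaux.YSc p (g i) := by
      ext y
      constructor
      · intro hy
        have hysp : CPaux.sp p (Sum.inr y) := by
          simpa [CPaux.sp] using CPaux.memY_sp C' hpos hy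
        have hygood : (CPaux.G p).connectedComponentMk (Sum.inr y) ∈ CPaux.Gd p :=
          CPaux.mem_Gd.mpr ⟨Sum.inr y, hysp, rfl⟩
        obtain ⟨j, hj⟩ := hsurj _ hygood
        have hmem : CPaux.memB C' j (Sum.inr y) :=
          CPaux.memB_reach C' hpos (z := Sum.inr (ys j)) (hys j)
            (SimpleGraph.ConnectedComponent.eq.mp hj)
        have hji : j = i := by
          by_contra hji
          exact (Finset.disjoint_left.mp (C'.disjY j i hji) hmem) hy
        subst hji
        exact CPaux.mem_YSc.mpr hj.symm
      · intro hy
        have hval : (CPaux.G p).connectedComponentMk (Sum.inr y) = g i :=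
          CPaux.mem_YSc.mp hy
        exact CPaux.memB_reach C' hpos (z := Sum.inr (ys i)) (hys i)
          (SimpleGraph.ConnectedComponent.eq.mp hval.symm)
    rw [hcanX, hcanY, hXeq, hYeq]
    exact ⟨rfl, rfl⟩
end

section
/- For 0 < λ < 1/2, let C = (1/2)(1 + 2√(λ(1-λ))), the concurrence of the state ρ^{AB} = (1/2)|Φ⟩⟨Φ| + (1/2)|ψ_λ⟩⟨ψ_λ| with |Φ⟩ = (|00⟩+|11⟩)/√2 and |ψ_λ⟩ = √λ|00⟩ + √(1-λ)|11⟩. Then (1 + h(λ))/2 > h((1 + √(1 - C²))/2), where h is the binary entropy function. -/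
open Real

/-- The binary entropy function (base-2 logarithm). -/
noncomputable def binEnt (x : ℝ) : ℝ := -(x * Real.logb 2 x) - (1 - x) * Real.logb 2 (1 - x)

open Set

noncomputable def gg (x : ℝ) : ℝ := (1+x) * Real.log (1+x) + (1-x) * Real.log (1-x)

lemma hasDerivAt_gg {y : ℝ} (h1 : -1 < y) (h2 : y < 1) :
    HasDerivAt gg (Real.log (1+y) - Real.log (1-y)) y := by
  have hy1 : (0:ℝ) < 1 + y := by linarith
  have hy2 : (0:ℝ) < 1 - y := by linarith
  have d1 : HasDerivAt (fun x : ℝ => Real.log (1+x)) (1/(1+y)) y := by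
    have := (Real.hasDerivAt_log hy1.ne').comp y ((hasDerivAt_id y).const_add 1)
    simpa [one_div, Function.comp_def] using this
  have d2 : HasDerivAt (fun x : ℝ => Real.log (1-x)) (-(1/(1-y))) y := by
    have := (Real.hasDerivAt_log hy2.ne').comp y ((hasDerivAt_id y).neg.const_add 1)
    simpa [one_div, Function.comp_def] using this
  have p1 : HasDerivAt (fun x : ℝ => (1+x) * Real.log (1+x))
      (1 * Real.log (1+y) + (1+y) * (1/(1+y))) y :=
    (((hasDerivAt_id y).const_add 1)).mul d1
  have p2 : HasDerivAt (fun x : ℝ => (1-x) * Real.log (1-x))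
      ((-1) * Real.log (1-y) + (1-y) * (-(1/(1-y)))) y := by
    have : HasDerivAt (fun x : ℝ => 1 - x) (-1) y := by
      exact (hasDerivAt_id y).const_sub 1
    exact this.mul d2
  have := p1.add p2
  refine this.congr_deriv ?_
  field_simp
  ring

lemma artanh_lb {x : ℝ} (h0 : 0 ≤ x) (h1 : x < 1) :
    2*x + 2*x^3/3 + 2*x^5/5 ≤ Real.log (1+x) - Real.log (1-x) := by
  set F : ℝ → ℝ := fun y => Real.log (1+y) - Real.log (1-y) - (2*y + 2*y^3/3 + 2*y^5/5) with hF
  have hd : ∀ y ∈ Icc (0:ℝ) x, HasDerivAt F (1/(1+y) + 1/(1-y) - (2 + 2*y^2 + 2*y^4)) y := by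
    intro y hy
    have hy1 : (0:ℝ) < 1 + y := by have := hy.1; linarith
    have hy2 : (0:ℝ) < 1 - y := by have := hy.2; linarith
    have d1 : HasDerivAt (fun z : ℝ => Real.log (1+z)) (1/(1+y)) y := by
      have := (Real.hasDerivAt_log hy1.ne').comp y ((hasDerivAt_id y).const_add 1)
      simpa [one_div, Function.comp_def] using this
    have d2 : HasDerivAt (fun z : ℝ => Real.log (1-z)) (-(1/(1-y))) y := by
      have := (Real.hasDerivAt_log hy2.ne').comp y ((hasDerivAt_id y).neg.const_add 1)
      simpa [one_div, Function.comp_def] using this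
    have dp : HasDerivAt (fun z : ℝ => 2*z + 2*z^3/3 + 2*z^5/5) (2 + 2*y^2 + 2*y^4) y := by
      have : HasDerivAt (fun z : ℝ => 2*z + 2*z^3/3 + 2*z^5/5)
          (2*1 + 2*(3*y^2)/3 + 2*(5*y^4)/5) y := by
        exact (((hasDerivAt_id y).const_mul 2).add
          (((hasDerivAt_pow 3 y).const_mul 2).div_const 3)).add
          (((hasDerivAt_pow 5 y).const_mul 2).div_const 5)
      convert this using 1; ring
    have := (d1.sub d2).sub dp
    refine this.congr_deriv ?_; ring
  have hmono : MonotoneOn F (Icc 0 x) := by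
    apply monotoneOn_of_hasDerivWithinAt_nonneg (convex_Icc 0 x)
      (fun y hy => (hd y hy).continuousAt.continuousWithinAt)
      (fun y hy => ((hd y (interior_subset hy)).hasDerivWithinAt).mono interior_subset)
    intro y hy
    rw [interior_Icc] at hy
    have hy0 : 0 < y := hy.1
    have hyx : y < x := hy.2
    have hy2 : (0:ℝ) < 1 - y := by linarith
    have hy1 : (0:ℝ) < 1 + y := by linarith
    have key : 1/(1+y) + 1/(1-y) = 2/((1+y)*(1-y)) := by field_simp; ring
    rw [key, sub_nonneg, ← sub_nonneg]
    have : 2/((1+y)*(1-y)) - (2 + 2*y^2 + 2*y^4) = 2*y^6/((1+y)*(1-y)) := by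
      field_simp; ring
    rw [this]
    positivity
  have h00 : F 0 = 0 := by simp [hF]
  have := hmono (left_mem_Icc.mpr h0) (right_mem_Icc.mpr h0) h0
  rw [h00] at this
  simpa [hF] using this

lemma artanh_ub {x : ℝ} (h0 : 0 ≤ x) (h1 : x < 1) :
    Real.log (1+x) - Real.log (1-x) ≤ 2*x + 2*x^3/3 + 2*x^5/5 + 2*x^7/(7*(1-x^2)) := by
  set F : ℝ → ℝ := fun y => 2*y + 2*y^3/3 + 2*y^5/5 + 2*y^7/(7*(1-y^2))
    - (Real.log (1+y) - Real.log (1-y)) with hF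
  have hd : ∀ y ∈ Icc (0:ℝ) x, HasDerivAt F
      ((2 + 2*y^2 + 2*y^4)
        + (14*y^6*(7*(1-y^2)) - 2*y^7*(7*(0-2*y)))/(7*(1-y^2))^2
        - (1/(1+y) + 1/(1-y))) y := by
    intro y hy
    have hy1 : (0:ℝ) < 1 + y := by have := hy.1; linarith
    have hy2 : (0:ℝ) < 1 - y := by have := hy.2; linarith
    have hv : (7:ℝ)*(1-y^2) ≠ 0 := by
      have : (0:ℝ) < 1 - y^2 := by nlinarith
      positivity
    have d1 : HasDerivAt (fun z : ℝ => Real.log (1+z)) (1/(1+y)) y := by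
      have := (Real.hasDerivAt_log hy1.ne').comp y ((hasDerivAt_id y).const_add 1)
      simpa [one_div, Function.comp_def] using this
    have d2 : HasDerivAt (fun z : ℝ => Real.log (1-z)) (-(1/(1-y))) y := by
      have := (Real.hasDerivAt_log hy2.ne').comp y ((hasDerivAt_id y).neg.const_add 1)
      simpa [one_div, Function.comp_def] using this
    have dp : HasDerivAt (fun z : ℝ => 2*z + 2*z^3/3 + 2*z^5/5) (2 + 2*y^2 + 2*y^4) y := by
      have : HasDerivAt (fun z : ℝ => 2*z + 2*z^3/3 + 2*z^5/5)
          (2*1 + 2*((3:ℕ)*y^2)/3 + 2*((5:ℕ)*y^4)/5) y :=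
        (((hasDerivAt_id y).const_mul 2).add
          (((hasDerivAt_pow 3 y).const_mul 2).div_const 3)).add
          (((hasDerivAt_pow 5 y).const_mul 2).div_const 5)
      convert this using 1; push_cast; ring
    have du : HasDerivAt (fun z : ℝ => 2*z^7) (14*y^6) y := by
      have := (hasDerivAt_pow 7 y).const_mul (2:ℝ)
      refine this.congr_deriv ?_; push_cast; ring
    have dv : HasDerivAt (fun z : ℝ => 7*(1-z^2)) (7*(0-2*y)) y := by
      have : HasDerivAt (fun z : ℝ => 1 - z^2) (0 - (2:ℕ)*y^1) y :=
        (hasDerivAt_const y 1).sub (hasDerivAt_pow 2 y)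
      have := this.const_mul (7:ℝ)
      refine this.congr_deriv ?_; push_cast; ring
    have dq : HasDerivAt (fun z : ℝ => 2*z^7/(7*(1-z^2)))
        ((14*y^6*(7*(1-y^2)) - 2*y^7*(7*(0-2*y)))/(7*(1-y^2))^2) y := du.div dv hv
    have := (dp.add dq).sub (d1.sub d2)
    refine this.congr_deriv ?_; ring
  have hmono : MonotoneOn F (Icc 0 x) := by
    apply monotoneOn_of_hasDerivWithinAt_nonneg (convex_Icc 0 x)
      (fun y hy => (hd y hy).continuousAt.continuousWithinAt)
      (fun y hy => ((hd y (interior_subset hy)).hasDerivWithinAt).mono interior_subset)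
    intro y hy
    rw [interior_Icc] at hy
    have hy0 : 0 < y := hy.1
    have hyx : y < x := hy.2
    have hy1 : (0:ℝ) < 1 + y := by linarith
    have hy2 : (0:ℝ) < 1 - y := by linarith
    have hsq : (0:ℝ) < 1 - y^2 := by nlinarith
    have key : (2 + 2*y^2 + 2*y^4)
        + (14*y^6*(7*(1-y^2)) - 2*y^7*(7*(0-2*y)))/(7*(1-y^2))^2
        - (1/(1+y) + 1/(1-y)) = 4*y^8/(7*(1-y^2)^2) := by
      field_simp
      ring
    rw [key]
    positivity
  have h00 : F 0 = 0 := by simp [hF]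
  have := hmono (left_mem_Icc.mpr h0) (right_mem_Icc.mpr h0) h0
  rw [h00] at this
  simp only [hF] at this
  linarith

lemma gg_lb {x : ℝ} (h0 : 0 ≤ x) (h1 : x < 1) :
    x^2 + x^4/6 + x^6/15 ≤ gg x := by
  set G : ℝ → ℝ := fun y => gg y - (y^2 + y^4/6 + y^6/15) with hG
  have hd : ∀ y ∈ Icc (0:ℝ) x, HasDerivAt G
      (Real.log (1+y) - Real.log (1-y) - (2*y + 4*y^3/6 + 6*y^5/15)) y := by
    intro y hy
    have hgg := hasDerivAt_gg (by linarith [hy.1] : -1 < y) (by linarith [hy.2] : y < 1)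
    have dp : HasDerivAt (fun z : ℝ => z^2 + z^4/6 + z^6/15) (2*y + 4*y^3/6 + 6*y^5/15) y := by
      have : HasDerivAt (fun z : ℝ => z^2 + z^4/6 + z^6/15)
          ((2:ℕ)*y^1 + ((4:ℕ)*y^3)/6 + ((6:ℕ)*y^5)/15) y :=
        ((hasDerivAt_pow 2 y).add ((hasDerivAt_pow 4 y).div_const 6)).add
          ((hasDerivAt_pow 6 y).div_const 15)
      convert this using 1; push_cast; ring
    exact hgg.sub dp
  have hmono : MonotoneOn G (Icc 0 x) := by
    apply monotoneOn_of_hasDerivWithinAt_nonneg (convex_Icc 0 x)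
      (fun y hy => (hd y hy).continuousAt.continuousWithinAt)
      (fun y hy => ((hd y (interior_subset hy)).hasDerivWithinAt).mono interior_subset)
    intro y hy
    rw [interior_Icc] at hy
    have := artanh_lb (le_of_lt hy.1) (lt_trans hy.2 h1)
    have e : 2*y + 4*y^3/6 + 6*y^5/15 = 2*y + 2*y^3/3 + 2*y^5/5 := by ring
    rw [e]; linarith
  have h00 : G 0 = 0 := by simp [hG, gg]
  have := hmono (left_mem_Icc.mpr h0) (right_mem_Icc.mpr h0) h0
  rw [h00] at this
  simpa [hG] using this

noncomputable def cc : ℝ := 2*Real.log 2 - 7/6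

lemma cc_lb : 0.2196276 < cc := by
  have := Real.log_two_gt_d9; unfold cc; norm_num at this ⊢; linarith

lemma cc_ub : cc < 0.2196279 := by
  have := Real.log_two_lt_d9; unfold cc; norm_num at this ⊢; linarith

noncomputable def HH (y : ℝ) : ℝ := y^2 + y^4/6 + cc*y^6 - gg y

lemma continuous_gg : Continuous gg := by
  have hc1 : Continuous (fun x : ℝ => 1 + x) := by continuity
  have hc2 : Continuous (fun x : ℝ => 1 - x) := by continuity
  exact (Real.continuous_mul_log.comp hc1).add (Real.continuous_mul_log.comp hc2)

lemma hasDerivAt_HH {y : ℝ} (h1 : -1 < y) (h2 : y < 1) :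
    HasDerivAt HH (2*y + 4*y^3/6 + cc*(6*y^5) - (Real.log (1+y) - Real.log (1-y))) y := by
  have hgg := hasDerivAt_gg h1 h2
  have dp : HasDerivAt (fun z : ℝ => z^2 + z^4/6 + cc*z^6) (2*y + 4*y^3/6 + cc*(6*y^5)) y := by
    have : HasDerivAt (fun z : ℝ => z^2 + z^4/6 + cc*z^6)
        ((2:ℕ)*y^1 + ((4:ℕ)*y^3)/6 + cc*((6:ℕ)*y^5)) y :=
      ((hasDerivAt_pow 2 y).add ((hasDerivAt_pow 4 y).div_const 6)).add
        ((hasDerivAt_pow 6 y).const_mul cc)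
    convert this using 1; push_cast; ring
  exact dp.sub hgg

lemma HH_nonneg_left {x : ℝ} (h0 : 0 ≤ x) (h1 : x ≤ 17/20) : 0 ≤ HH x := by
  have hmono : MonotoneOn HH (Icc 0 (17/20 : ℝ)) := by
    apply monotoneOn_of_hasDerivWithinAt_nonneg (convex_Icc _ _)
      (fun y hy => ((hasDerivAt_HH (by linarith [hy.1]) (by linarith [hy.2])).continuousAt).continuousWithinAt)
      (fun y hy => by
        rw [interior_Icc] at hy
        exact ((hasDerivAt_HH (by linarith [hy.1]) (by linarith [hy.2])).hasDerivWithinAt).mono interior_subset)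
    intro y hy
    rw [interior_Icc] at hy
    obtain ⟨hy0, hy85⟩ := hy
    have hy1 : y < 1 := by linarith
    have hub := artanh_ub (le_of_lt hy0) hy1
    have hsq : (0:ℝ) < 1 - y^2 := by nlinarith
    have hc := cc_lb
    have htail : 2*y^7/(7*(1-y^2)) ≤ (6*cc - 2/5)*y^5 := by
      rw [div_le_iff₀ (by positivity)]
      have hkey : 0 ≤ ((6*cc - 2/5)*(7*(1-y^2)) - 2*y^2) := by nlinarith
      have := mul_nonneg (pow_nonneg (le_of_lt hy0) 5) hkey
      nlinarith [this]
    have : Real.log (1+y) - Real.log (1-y) ≤ 2*y + 4*y^3/6 + cc*(6*y^5) := by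
      have e : 2*y + 2*y^3/3 + 2*y^5/5 + (6*cc - 2/5)*y^5 = 2*y + 4*y^3/6 + cc*(6*y^5) := by ring
      linarith
    linarith
  have h00 : HH 0 = 0 := by simp [HH, gg]
  have := hmono (left_mem_Icc.mpr (by norm_num)) ⟨h0, h1⟩ h0
  rw [h00] at this; exact this

lemma HH_one : HH 1 = 0 := by
  unfold HH gg cc
  norm_num

lemma HH_concave : ConcaveOn ℝ (Icc (17/20 : ℝ) 1) HH := by
  apply concaveOn_of_hasDerivWithinAt2_nonpos (convex_Icc _ _)
    (f' := fun y => 2*y + 4*y^3/6 + cc*(6*y^5) - (Real.log (1+y) - Real.log (1-y)))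
    (f'' := fun y => 2 + 2*y^2 + cc*(30*y^4) - (1/(1+y) + 1/(1-y)))
  · have : Continuous HH := by
      unfold HH
      exact (((continuous_pow 2).add ((continuous_pow 4).div_const 6)).add
        (continuous_const.mul (continuous_pow 6))).sub continuous_gg
    exact this.continuousOn
  · intro y hy
    rw [interior_Icc] at hy
    exact ((hasDerivAt_HH (by linarith [hy.1]) hy.2).hasDerivWithinAt).mono interior_subset
  · intro y hy
    rw [interior_Icc] at hy
    obtain ⟨hy85, hy1⟩ := hy
    have hp1 : (0:ℝ) < 1 + y := by linarith
    have hp2 : (0:ℝ) < 1 - y := by linarith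
    have d1 : HasDerivAt (fun z : ℝ => Real.log (1+z)) (1/(1+y)) y := by
      have := (Real.hasDerivAt_log hp1.ne').comp y ((hasDerivAt_id y).const_add 1)
      simpa [one_div, Function.comp_def] using this
    have d2 : HasDerivAt (fun z : ℝ => Real.log (1-z)) (-(1/(1-y))) y := by
      have := (Real.hasDerivAt_log hp2.ne').comp y ((hasDerivAt_id y).neg.const_add 1)
      simpa [one_div, Function.comp_def] using this
    have dp : HasDerivAt (fun z : ℝ => 2*z + 4*z^3/6 + cc*(6*z^5)) (2 + 2*y^2 + cc*(30*y^4)) y := by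
      have : HasDerivAt (fun z : ℝ => 2*z + 4*z^3/6 + cc*(6*z^5))
          (2*1 + 4*((3:ℕ)*y^2)/6 + cc*(6*((5:ℕ)*y^4))) y :=
        (((hasDerivAt_id y).const_mul 2).add
          (((hasDerivAt_pow 3 y).const_mul 4).div_const 6)).add
          (((hasDerivAt_pow 5 y).const_mul 6).const_mul cc)
      convert this using 1; push_cast; ring
    have := dp.sub (d1.sub d2)
    refine HasDerivWithinAt.mono ?_ interior_subset
    convert this.hasDerivWithinAt using 1; rfl
    ring
  · intro y hy
    rw [interior_Icc] at hy
    obtain ⟨hy85, hy1⟩ := hy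
    have hp1 : (0:ℝ) < 1 + y := by linarith
    have hp2 : (0:ℝ) < 1 - y := by linarith
    have key : 1/(1+y) + 1/(1-y) = 2/((1+y)*(1-y)) := by field_simp; ring
    rw [sub_nonpos, key, le_div_iff₀ (by positivity : (0:ℝ) < (1+y)*(1-y))]
    have h4 : (0:ℝ) ≤ y^4 := by positivity
    have hin : (0:ℝ) ≤ 30*cc*y^2 - 30*cc + 2 := by nlinarith [cc_ub, cc_lb, hy85]
    nlinarith [mul_nonneg h4 hin, cc_lb]

lemma gg_ub {x : ℝ} (h0 : 0 ≤ x) (h1 : x ≤ 1) : gg x ≤ x^2 + x^4/6 + cc*x^6 := by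
  have : 0 ≤ HH x := by
    rcases le_or_gt x (17/20) with h | h
    · exact HH_nonneg_left h0 h
    · have hθ0 : (0:ℝ) ≤ (1-x)/(3/20) := by
        apply div_nonneg <;> linarith
      have hθ1 : (0:ℝ) ≤ 1 - (1-x)/(3/20) := by
        have : (1-x)/(3/20) ≤ 1 := by rw [div_le_one (by norm_num)]; linarith
        linarith
      have hcomb := HH_concave.2 (left_mem_Icc.mpr (by norm_num))
        (right_mem_Icc.mpr (by norm_num)) hθ0 hθ1 (by ring)
      have hx : ((1-x)/(3/20)) • (17/20 : ℝ) + (1 - (1-x)/(3/20)) • (1:ℝ) = x := by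
        rw [smul_eq_mul, smul_eq_mul]; field_simp; ring
      rw [hx, smul_eq_mul, smul_eq_mul, HH_one, mul_zero, add_zero] at hcomb
      have h85 : 0 ≤ HH (17/20 : ℝ) := HH_nonneg_left (by norm_num) le_rfl
      nlinarith [hcomb, mul_nonneg hθ0 h85]
  unfold HH at this
  linarith

lemma binEnt_plus {x : ℝ} (h0 : 0 ≤ x) (h1 : x < 1) :
    binEnt ((1+x)/2) = 1 - gg x / (2*Real.log 2) := by
  have hp1 : (0:ℝ) < 1 + x := by linarith
  have hp2 : (0:ℝ) < 1 - x := by linarith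
  have hL : (0:ℝ) < Real.log 2 := Real.log_pos one_lt_two
  unfold binEnt gg
  rw [show (1:ℝ) - (1+x)/2 = (1-x)/2 by ring]
  simp only [Real.logb]
  rw [Real.log_div hp1.ne' two_ne_zero, Real.log_div hp2.ne' two_ne_zero]
  field_simp
  ring

lemma binEnt_minus {x : ℝ} (h0 : 0 ≤ x) (h1 : x < 1) :
    binEnt ((1-x)/2) = 1 - gg x / (2*Real.log 2) := by
  have hp1 : (0:ℝ) < 1 + x := by linarith
  have hp2 : (0:ℝ) < 1 - x := by linarith
  have hL : (0:ℝ) < Real.log 2 := Real.log_pos one_lt_two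
  unfold binEnt gg
  rw [show (1:ℝ) - (1-x)/2 = (1+x)/2 by ring]
  simp only [Real.logb]
  rw [Real.log_div hp1.ne' two_ne_zero, Real.log_div hp2.ne' two_ne_zero]
  field_simp
  ring

set_option maxHeartbeats 2000000 in
/-- For `0 < λ < 1/2`, letting `C = (1 + 2√(λ(1-λ)))/2` be the concurrence of the state
`ρ^{AB} = (1/2)|Φ⟩⟨Φ| + (1/2)|ψ_λ⟩⟨ψ_λ|`, the classical key rate `(1 + h(λ))/2` strictly
exceeds the entanglement of formation `h((1 + √(1 - C²))/2)`. -/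
theorem key_rate_exceeds_EF (lam : ℝ) (h0 : 0 < lam) (h12 : lam < 1 / 2) :
    (1 + binEnt lam) / 2 >
      binEnt ((1 + Real.sqrt (1 - ((1 + 2 * Real.sqrt (lam * (1 - lam))) / 2) ^ 2)) / 2) := by
  have hll : 0 < lam * (1 - lam) := by nlinarith
  set s := Real.sqrt (lam * (1 - lam)) with hs
  have hs2 : s^2 = lam * (1 - lam) := Real.sq_sqrt hll.le
  have hs0 : 0 < s := Real.sqrt_pos.mpr hll
  set w : ℝ := 2*s with hwdef
  have hw0 : 0 < w := by positivity
  have hw2 : w^2 = 4*(lam*(1-lam)) := by rw [hwdef]; rw [mul_pow]; rw [hs2]; ring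
  have hw1 : w < 1 := by nlinarith [hw2]
  set t : ℝ := 1 - 2*lam with htdef
  have ht0 : 0 < t := by rw [htdef]; linarith
  have ht1 : t < 1 := by rw [htdef]; linarith
  have htw : t^2 = 1 - w^2 := by rw [htdef, hw2]; ring
  have hCpos : (0:ℝ) ≤ 1 - ((1 + 2*s)/2)^2 := by
    have : 1 - ((1 + 2*s)/2)^2 = (1-w)*(3+w)/4 := by rw [hwdef]; ring
    rw [this]; nlinarith
  set u := Real.sqrt (1 - ((1 + 2*s)/2)^2) with hu
  have hu0 : 0 ≤ u := Real.sqrt_nonneg _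
  have hu2 : u^2 = (1-w)*(3+w)/4 := by
    rw [hu, Real.sq_sqrt hCpos, hwdef]; ring
  have hu1 : u < 1 := by nlinarith [hu2]
  have hL : (0:ℝ) < Real.log 2 := Real.log_pos one_lt_two
  have e1 : binEnt lam = 1 - gg t / (2*Real.log 2) := by
    rw [show lam = (1-t)/2 by rw [htdef]; ring]
    exact binEnt_minus ht0.le ht1
  have e2 : binEnt ((1+u)/2) = 1 - gg u / (2*Real.log 2) := binEnt_plus hu0 hu1
  rw [e1, e2]
  have hu4 : u^4 = ((1-w)*(3+w)/4)^2 := by rw [(by ring : u^4 = (u^2)^2), hu2]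
  have hu6 : u^6 = ((1-w)*(3+w)/4)^3 := by rw [(by ring : u^6 = (u^2)^3), hu2]
  have ht4 : t^4 = (1-w^2)^2 := by rw [(by ring : t^4 = (t^2)^2), htw]
  have ht6 : t^6 = (1-w^2)^3 := by rw [(by ring : t^6 = (t^2)^3), htw]
  have hpoly : 2*(u^2 + u^4/6 + u^6/15) > t^2 + t^4/6 + cc*t^6 := by
    rw [hu2, hu4, hu6, htw, ht4, ht6]
    have hpos4 : (0:ℝ) ≤ 1 + 2*w - 2*w^3 - w^4 := by nlinarith [hw0, hw1]
    have hKb : 480*cc*(1 + 2*w - 2*w^3 - w^4)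
        ≤ (105421392/1000000 : ℝ)*(1 + 2*w - 2*w^3 - w^4) :=
      mul_le_mul_of_nonneg_right (by have := cc_ub; norm_num at this ⊢; linarith) hpos4
    have hQ : (0:ℝ) < 277 - 100*w - 88*w^2 - 8*w^3 - w^4 - 480*cc*(1+2*w-2*w^3-w^4) := by
      nlinarith [hKb, mul_nonneg hw0.le (sq_nonneg (w - 13/20)),
        mul_nonneg (mul_nonneg hw0.le hw0.le) (sq_nonneg (w - 13/20)),
        sq_nonneg (w - 7/10), mul_nonneg hw0.le (sq_nonneg (w - 7/10))]
    have hsq : (0:ℝ) < (1-w)^2 := pow_pos (by linarith) 2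
    have hprod := mul_pos hsq hQ
    have hfact : 2*((1-w)*(3+w)/4 + ((1-w)*(3+w)/4)^2/6 + ((1-w)*(3+w)/4)^3/15)
        - ((1-w^2) + (1-w^2)^2/6 + cc*(1-w^2)^3)
        = (1-w)^2 * (277 - 100*w - 88*w^2 - 8*w^3 - w^4 - 480*cc*(1+2*w-2*w^3-w^4))/480 := by
      ring
    linarith [hfact, hprod]
  have key : 2 * gg u > gg t := by
    have lb := gg_lb hu0 hu1
    have ub := gg_ub ht0.le ht1.le
    linarith [lb, ub, hpoly]
  have diff : (1 + (1 - gg t/(2*Real.log 2)))/2 - (1 - gg u/(2*Real.log 2))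
      = (2*gg u - gg t)/(4*Real.log 2) := by field_simp; ring
  have hpos : 0 < (2*gg u - gg t)/(4*Real.log 2) := div_pos (by linarith) (by linarith)
  linarith
end
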